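/- Algebraic extensions yield deontic action algebras: if Φ is a ⊢-consistent set of DAL formulas, Δ is a set of basic deontic defaults, and (P, F) is an algebraic extension of Φ under Δ, then the triple ⟨A_Φ, P, F⟩ is a deontic action algebra; in particular P ∩ F = {[0]_Φ}. -/

import Mathlib

namespace DAL

/-- Actions of DAL over a countable set of basic action symbols. -/
inductive Act : Type where
  | basic : ℕ → Act
  | join : Act → Act → Act
  | meet : Act → Act → Act
  | compl : Act → Act
  | zero : Act
  | one : Act

/-- Formulas of DAL. -/
inductive Fml : Type where
  | neg : Fml → Fml
  | or : Fml → Fml → Fml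
  | eq : Act → Act → Fml
  | perm : Act → Fml
  | forb : Act → Fml

/-- Material implication, defined from ¬ and ∨. -/
def fImp (p q : Fml) : Fml := .or (.neg p) q
/-- Conjunction, defined from ¬ and ∨. -/
def fAnd (p q : Fml) : Fml := .neg (.or (.neg p) (.neg q))
/-- Biconditional. -/
def fIff (p q : Fml) : Fml := fAnd (fImp p q) (fImp q p)
/-- Verum. -/
def fTop : Fml := .or (.eq .zero .zero) (.neg (.eq .zero .zero))
/-- Falsum. -/
def fBot : Fml := .neg fTop

/-- `ARepl a b γ γ'` : γ' is obtained from γ by replacing some (possibly zero)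
occurrences of the action `a` with the action `b`. -/
inductive ARepl (a b : Act) : Act → Act → Prop where
  | repl : ARepl a b a b
  | basic (n : ℕ) : ARepl a b (.basic n) (.basic n)
  | zero : ARepl a b .zero .zero
  | one : ARepl a b .one .one
  | join {x x' y y'} : ARepl a b x x' → ARepl a b y y' → ARepl a b (.join x y) (.join x' y')
  | meet {x x' y y'} : ARepl a b x x' → ARepl a b y y' → ARepl a b (.meet x y) (.meet x' y')
  | compl {x x'} : ARepl a b x x' → ARepl a b (.compl x) (.compl x')

/-- `FRepl a b φ φ'` : φ' is obtained from φ by replacing some (possibly zero)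
occurrences of the action `a` with the action `b`. -/
inductive FRepl (a b : Act) : Fml → Fml → Prop where
  | neg {p p'} : FRepl a b p p' → FRepl a b (.neg p) (.neg p')
  | or {p p' q q'} : FRepl a b p p' → FRepl a b q q' → FRepl a b (.or p q) (.or p' q')
  | eq {x x' y y'} : ARepl a b x x' → ARepl a b y y' → FRepl a b (.eq x y) (.eq x' y')
  | perm {x x'} : ARepl a b x x' → FRepl a b (.perm x) (.perm x')
  | forb {x x'} : ARepl a b x x' → FRepl a b (.forb x) (.forb x')

/-- The axioms of the Hilbert system for DAL: a complete classical axiomatization of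
¬, ∨; Boolean algebra axioms for actions plus ¬(0=1); equality and substitution
axioms; and the deontic axioms D1, D2, D3. -/
inductive Ax : Fml → Prop where
  -- classical axioms for ¬ and ∨ (Principia Mathematica style)
  | pl1 (p : Fml) : Ax (fImp (.or p p) p)
  | pl2 (p q : Fml) : Ax (fImp p (.or p q))
  | pl3 (p q : Fml) : Ax (fImp (.or p q) (.or q p))
  | pl4 (p q r : Fml) : Ax (fImp (fImp p q) (fImp (.or r p) (.or r q)))
  -- Boolean algebra axioms for actions
  | joinComm (x y : Act) : Ax (.eq (.join x y) (.join y x))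
  | meetComm (x y : Act) : Ax (.eq (.meet x y) (.meet y x))
  | joinAssoc (x y z : Act) : Ax (.eq (.join x (.join y z)) (.join (.join x y) z))
  | meetAssoc (x y z : Act) : Ax (.eq (.meet x (.meet y z)) (.meet (.meet x y) z))
  | joinDistrib (x y z : Act) : Ax (.eq (.join x (.meet y z)) (.meet (.join x y) (.join x z)))
  | meetDistrib (x y z : Act) : Ax (.eq (.meet x (.join y z)) (.join (.meet x y) (.meet x z)))
  | joinZero (x : Act) : Ax (.eq (.join x .zero) x)
  | meetOne (x : Act) : Ax (.eq (.meet x .one) x)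
  | joinCompl (x : Act) : Ax (.eq (.join x (.compl x)) .one)
  | meetCompl (x : Act) : Ax (.eq (.meet x (.compl x)) .zero)
  | nondeg : Ax (.neg (.eq .zero .one))
  -- equality axioms
  | eqRefl (x : Act) : Ax (.eq x x)
  | eqSymm (x y : Act) : Ax (fImp (.eq x y) (.eq y x))
  | eqTrans (x y z : Act) : Ax (fImp (.eq x y) (fImp (.eq y z) (.eq x z)))
  -- substitution axiom
  | subst {x y : Act} {p q : Fml} : FRepl x y p q → Ax (fImp (.eq x y) (fImp p q))
  -- deontic axioms
  | d1 (x y : Act) : Ax (fIff (.perm (.join x y)) (fAnd (.perm x) (.perm y)))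
  | d2 (x y : Act) : Ax (fIff (.forb (.join x y)) (fAnd (.forb x) (.forb y)))
  | d3 (x : Act) : Ax (fIff (.eq x .zero) (fAnd (.perm x) (.forb x)))

/-- `IsProof Φ s` : the finite sequence (list) `s` is a proof from `Φ`: every member
is an axiom, a member of `Φ`, or follows from two earlier members by modus ponens. -/
def IsProof (Φ : Set Fml) (s : List Fml) : Prop :=
  ∀ (k : ℕ) (hk : k < s.length),
    Ax (s[k]'hk) ∨ (s[k]'hk) ∈ Φ ∨
      ∃ (i j : ℕ) (hi : i < k) (hj : j < k),
        s[j]'(Nat.lt_trans hj hk) = fImp (s[i]'(Nat.lt_trans hi hk)) (s[k]'hk)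

/-- `Prov Φ φ` (Φ ⊢ φ) : there is a proof of φ from Φ. -/
def Prov (Φ : Set Fml) (φ : Fml) : Prop :=
  ∃ s : List Fml, IsProof Φ s ∧ s.getLast? = some φ

/-- Φ is ⊢-consistent. -/
def Consistent (Φ : Set Fml) : Prop := ¬ Prov Φ fBot

/-- Deductive closure. -/
def Cn (Ψ : Set Fml) : Set Fml := {φ | Prov Ψ φ}

end DAL

namespace DAL

/-- A default π:ρ/χ with prerequisite, justification, and consequent. -/
structure Default : Type where
  pre : Fml
  jus : Fml
  con : Fml

/-- A default is normal iff its justification equals its consequent. -/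
def Default.Normal (d : Default) : Prop := d.jus = d.con

/-- The operator Γ^Φ_Δ : `GammaSet Φ Δ Ψ` is the smallest set `X` of formulas such
that (i) Φ ⊆ X, (ii) X is deductively closed, and (iii) for each default π:ρ/χ in Δ,
if π ∈ X and ¬ρ ∉ Ψ then χ ∈ X. -/
def GammaSet (Φ : Set Fml) (Δ : Set Default) (Ψ : Set Fml) : Set Fml :=
  ⋂₀ {X | Φ ⊆ X ∧ X = Cn X ∧ ∀ d ∈ Δ, d.pre ∈ X → Fml.neg d.jus ∉ Ψ → d.con ∈ X}

/-- `E` is a Reiter extension of Φ under Δ iff it is a fixed point of Γ^Φ_Δ. -/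
def IsExtension (Φ : Set Fml) (Δ : Set Default) (E : Set Fml) : Prop :=
  E = GammaSet Φ Δ E

/-- Default consequence (Φ |≈_Δ φ): some Reiter extension E of Φ under Δ
satisfies E ⊢ φ. -/
def DCons (Φ : Set Fml) (Δ : Set Default) (φ : Fml) : Prop :=
  ∃ E, IsExtension Φ Δ E ∧ Prov E φ

/-- One step of a default proof: an axiom, a member of Φ, modus ponens from two
earlier members, or default detachment from an earlier member. -/
def DProofStep (Φ : Set Fml) (Δ : Set Default) (s : List Fml) (k : ℕ) (hk : k < s.length) : Prop :=
  Ax (s[k]'hk) ∨ (s[k]'hk) ∈ Φ ∨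
    (∃ (i j : ℕ) (hi : i < k) (hj : j < k),
      s[j]'(Nat.lt_trans hj hk) = fImp (s[i]'(Nat.lt_trans hi hk)) (s[k]'hk)) ∨
    (∃ (j : ℕ) (hj : j < k),
      (⟨s[j]'(Nat.lt_trans hj hk), s[k]'hk, s[k]'hk⟩ : Default) ∈ Δ)

/-- Default provability (Φ ⊢_Δ φ): there is a finite sequence ψ₁,…,ψₙ with ψₙ = φ,
each member an axiom, a member of Φ, obtained by modus ponens, or obtained by
default detachment, such that {ψ₁,…,ψₙ} is ⊢-consistent. -/
def DProv (Φ : Set Fml) (Δ : Set Default) (φ : Fml) : Prop :=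
  ∃ s : List Fml,
    (∀ (k : ℕ) (hk : k < s.length), DProofStep Φ Δ s k hk) ∧
    s.getLast? = some φ ∧
    Consistent {ψ | ψ ∈ s}

end DAL

namespace DAL

/-- The elements of the Lindenbaum-Tarski algebra A_Φ are represented by
≡_Φ-saturated sets of actions; `zeroClass Φ` represents the singleton {[0]_Φ}. -/
def zeroClass (Φ : Set Fml) : Set Act := {α | Prov Φ (.eq α .zero)}

/-- An ideal of the Lindenbaum-Tarski algebra A_Φ, represented as a ≡_Φ-saturated
set of actions closed under ⊔ and closed under ⊓ with arbitrary actions. -/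
def IsIdealLT (Φ : Set Fml) (I : Set Act) : Prop :=
  (∀ α β : Act, Prov Φ (.eq α β) → α ∈ I → β ∈ I) ∧
  (∀ α ∈ I, ∀ β ∈ I, Act.join α β ∈ I) ∧
  (∀ α ∈ I, ∀ β : Act, Act.meet α β ∈ I)

/-- The ideal of A_Φ generated by a set: the intersection of all ideals containing it. -/
def genIdealLT (Φ : Set Fml) (B : Set Act) : Set Act :=
  ⋂₀ {I : Set Act | IsIdealLT Φ I ∧ B ⊆ I}

/-- P_{A_Φ}: the smallest ideal of A_Φ containing [α]_Φ whenever Φ ⊢ P(α). -/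
def PIdeal (Φ : Set Fml) : Set Act :=
  ⋂₀ {I : Set Act | IsIdealLT Φ I ∧ ∀ α : Act, Prov Φ (.perm α) → α ∈ I}

/-- F_{A_Φ}: the smallest ideal of A_Φ containing [α]_Φ whenever Φ ⊢ F(α). -/
def FIdeal (Φ : Set Fml) : Set Act :=
  ⋂₀ {I : Set Act | IsIdealLT Φ I ∧ ∀ α : Act, Prov Φ (.forb α) → α ∈ I}

/-- The Boolean order of A_Φ: [β]_Φ ⊑ [α]_Φ iff [β]_Φ = [β]_Φ · [α]_Φ. -/
def leLT (Φ : Set Fml) (β α : Act) : Prop := Prov Φ (.eq β (.meet β α))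

/-- The deontic dual P⁰ of P_{A_Φ}. -/
def dualP (Φ : Set Fml) : Set Act :=
  {β | ∃ α : Act, Prov Φ (.neg (.perm α)) ∧ leLT Φ β α} \ PIdeal Φ

/-- The deontic dual F⁰ of F_{A_Φ}. -/
def dualF (Φ : Set Fml) : Set Act :=
  {β | ∃ α : Act, Prov Φ (.neg (.forb α)) ∧ leLT Φ β α} \ FIdeal Φ

/-- [α]_Φ ≼ P⁰: some [β]_Φ ⊑ [α]_Φ lies in P⁰. -/
def precP (Φ : Set Fml) (α : Act) : Prop := ∃ β : Act, leLT Φ β α ∧ β ∈ dualP Φ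

/-- [α]_Φ ≼ F⁰: some [β]_Φ ⊑ [α]_Φ lies in F⁰. -/
def precF (Φ : Set Fml) (α : Act) : Prop := ∃ β : Act, leLT Φ β α ∧ β ∈ dualF Φ

/-- A set of defaults consists of basic deontic defaults only: each default has the
form P(α):P(β)/P(β) or F(α):F(β)/F(β). -/
def BasicDeonticSet (Δ : Set Default) : Prop :=
  ∀ d ∈ Δ, ∃ α β : Act,
    d = ⟨Fml.perm α, Fml.perm β, Fml.perm β⟩ ∨ d = ⟨Fml.forb α, Fml.forb β, Fml.forb β⟩

/-- The conditions (i)-(iii) that the output pair (P′, F′) of the operator E^Δ_Φ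
must satisfy. -/
def EConds (Φ : Set Fml) (Δ : Set Default) (P' F' : Set Act) : Prop :=
  IsIdealLT Φ P' ∧ IsIdealLT Φ F' ∧
  PIdeal Φ ⊆ P' ∧ FIdeal Φ ⊆ F' ∧
  (∀ α β : Act, (⟨Fml.perm α, Fml.perm β, Fml.perm β⟩ : Default) ∈ Δ →
    α ∈ P' → genIdealLT Φ (P' ∪ {β}) ∩ F' = zeroClass Φ → ¬ precP Φ β → β ∈ P') ∧
  (∀ α β : Act, (⟨Fml.forb α, Fml.forb β, Fml.forb β⟩ : Default) ∈ Δ →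
    α ∈ F' → genIdealLT Φ (F' ∪ {β}) ∩ P' = zeroClass Φ → ¬ precF Φ β → β ∈ F')

/-- The operator E^Δ_Φ as a relation: `EOpRel Φ Δ (P, F) (P', F')` holds iff
(P', F') is the (componentwise) smallest pair of ideals satisfying conditions
(i)-(iii), i.e. E^Δ_Φ(P, F) = (P', F'). -/
def EOpRel (Φ : Set Fml) (Δ : Set Default) :
    Set Act × Set Act → Set Act × Set Act → Prop :=
  fun _ out =>
    EConds Φ Δ out.1 out.2 ∧ ∀ Q G : Set Act, EConds Φ Δ Q G → out.1 ⊆ Q ∧ out.2 ⊆ G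

/-- (P, F) is an algebraic extension of Φ under Δ iff it is a fixed point of E^Δ_Φ. -/
def AlgExt (Φ : Set Fml) (Δ : Set Default) (P F : Set Act) : Prop :=
  EOpRel Φ Δ (P, F) (P, F)

/-- Satisfaction in the deontic action algebra ⟨A_Φ, P, F⟩ under the canonical
valuation I_Φ(a) = [a]_Φ, with ideals of A_Φ represented as saturated sets of
actions. -/
def SatLT (Φ : Set Fml) (P F : Set Act) : Fml → Prop
  | .neg φ => ¬ SatLT Φ P F φ
  | .or φ ψ => SatLT Φ P F φ ∨ SatLT Φ P F ψ
  | .eq α β => Prov Φ (.eq α β)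
  | .perm α => α ∈ P
  | .forb α => α ∈ F

end DAL

/-!
Minimality of the extension reduces `P ∩ F = {[0]}` to exhibiting a single pair `(Q, G)` of
ideals satisfying conditions (i)–(iii) with `Q ∩ G = {[0]}`. Take for `Q` the annihilator of
`F_{A_Φ}` and for `G` the annihilator of `Q`. By D1–D3 a permitted and a forbidden action meet
in `0`, so `P_{A_Φ} ⊆ Q`; and since a triple annihilator is the single one, each of `Q`, `G` is
the annihilator of the other. Then whenever adjoining `β` to one of them keeps it disjoint from
the other, `β` already annihilates the other, i.e. lies in the first; so conditions (ii) and
(iii) hold for every default.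
-/

namespace DAL

variable {Φ : Set Fml}

def IsProofStep (Φ : Set Fml) (s : List Fml) (k : ℕ) (hk : k < s.length) : Prop :=
  Ax (s[k]'hk) ∨ (s[k]'hk) ∈ Φ ∨
    ∃ (i j : ℕ) (hi : i < k) (hj : j < k),
      s[j]'(Nat.lt_trans hj hk) = fImp (s[i]'(Nat.lt_trans hi hk)) (s[k]'hk)

lemma IsProofStep.append {s : List Fml} {k : ℕ} {hk : k < s.length}
    (h : IsProofStep Φ s k hk) (t : List Fml) :
    IsProofStep Φ (s ++ t) k (by simp; omega) := by
  rcases h with h | h | ⟨i, j, hi, hj, hij⟩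
  · exact .inl (by simpa [List.getElem_append_left hk] using h)
  · exact .inr (.inl (by simpa [List.getElem_append_left hk] using h))
  · refine .inr (.inr ⟨i, j, hi, hj, ?_⟩)
    simp only [List.getElem_append_left hk, List.getElem_append_left (hi.trans hk),
      List.getElem_append_left (hj.trans hk), hij]

lemma IsProof.append {s t : List Fml} (hs : IsProof Φ s) (ht : IsProof Φ t) :
    IsProof Φ (s ++ t) := by
  intro k hk
  by_cases hks : k < s.length
  · exact IsProofStep.append (hs k hks) t
  · have hkt : k - s.length < t.length := by simp at hk; omega
    have hget : (s ++ t)[k] = t[k - s.length] := List.getElem_append_right (by omega)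
    rcases ht (k - s.length) hkt with h | h | ⟨i, j, hi, hj, hij⟩
    · exact .inl (hget ▸ h)
    · exact .inr (.inl (hget ▸ h))
    · refine .inr (.inr ⟨s.length + i, s.length + j, by omega, by omega, ?_⟩)
      simp [List.getElem_append_right, hget, hij]

lemma IsProof.concat_mp {s : List Fml} {p q : Fml} (hs : IsProof Φ s) (hp : p ∈ s)
    (hpq : fImp p q ∈ s) : IsProof Φ (s ++ [q]) := by
  intro k hk
  by_cases hks : k < s.length
  · exact IsProofStep.append (hs k hks) [q]
  · obtain ⟨i, hi, rfl⟩ := List.getElem_of_mem hp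
    obtain ⟨j, hj, hjpq⟩ := List.getElem_of_mem hpq
    obtain rfl : k = s.length := by simp at hk; omega
    refine .inr (.inr ⟨i, j, hi, hj, ?_⟩)
    simp [List.getElem_append_left hi, List.getElem_append_left hj, hjpq]

lemma Ax.prov {p : Fml} (h : Ax p) : Prov Φ p := by
  refine ⟨[p], fun k hk => ?_, rfl⟩
  obtain rfl : k = 0 := by simpa using hk
  exact .inl h

lemma Prov.mp {p q : Fml} (hpq : Prov Φ (fImp p q)) (hp : Prov Φ p) : Prov Φ q := by
  obtain ⟨s, hs, hs_last⟩ := hpq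
  obtain ⟨t, ht, ht_last⟩ := hp
  exact ⟨s ++ t ++ [q],
    (hs.append ht).concat_mp (List.mem_append_right s (List.mem_of_getLast? ht_last))
      (List.mem_append_left t (List.mem_of_getLast? hs_last)),
    List.getLast?_concat⟩

section Propositional

variable {p q r : Fml}

lemma Prov.imp_trans (h₁ : Prov Φ (fImp p q)) (h₂ : Prov Φ (fImp q r)) :
    Prov Φ (fImp p r) :=
  ((Ax.pl4 q r (.neg p)).prov.mp h₂).mp h₁

lemma prov_imp_refl (p : Fml) : Prov Φ (fImp p p) :=
  (Ax.pl2 p p).prov.imp_trans (Ax.pl1 p).prov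

lemma prov_em (p : Fml) : Prov Φ (.or p (.neg p)) :=
  (Ax.pl3 (.neg p) p).prov.mp (prov_imp_refl p)

lemma prov_imp_not_not (p : Fml) : Prov Φ (fImp p (.neg (.neg p))) :=
  (Ax.pl3 (.neg (.neg p)) (.neg p)).prov.mp (prov_imp_refl (.neg p))

lemma prov_not_not_imp (p : Fml) : Prov Φ (fImp (.neg (.neg p)) p) :=
  (Ax.pl3 p (.neg (.neg (.neg p)))).prov.mp
    (((Ax.pl4 (.neg p) (.neg (.neg (.neg p))) p).prov.mp (prov_imp_not_not (.neg p))).mp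
      (prov_em p))

lemma Prov.contrapose (h : Prov Φ (fImp p q)) : Prov Φ (fImp (.neg q) (.neg p)) :=
  (Ax.pl3 (.neg p) (.neg (.neg q))).prov.mp (h.imp_trans (prov_imp_not_not q))

lemma Prov.and_left (h : Prov Φ (fAnd p q)) : Prov Φ p :=
  ((Ax.pl2 (.neg p) (.neg q)).prov.contrapose.imp_trans (prov_not_not_imp p)).mp h

lemma Prov.and_right (h : Prov Φ (fAnd p q)) : Prov Φ q :=
  (((Ax.pl2 (.neg q) (.neg p)).prov.imp_trans (Ax.pl3 (.neg q) (.neg p)).prov).contrapose.imp_trans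
    (prov_not_not_imp q)).mp h

lemma prov_and (hp : Prov Φ p) (hq : Prov Φ q) : Prov Φ (fAnd p q) := by
  have hnp_nq : Prov Φ (fImp (.neg p) (.neg q)) :=
    (Ax.pl2 (.neg (.neg p)) (.neg q)).prov.mp ((prov_imp_not_not p).mp hp)
  have hnq : Prov Φ (fImp (.or (.neg p) (.neg q)) (.neg q)) :=
    (Ax.pl3 (.neg p) (.neg q)).prov.imp_trans
      (((Ax.pl4 (.neg p) (.neg q) (.neg q)).prov.mp hnp_nq).imp_trans (Ax.pl1 (.neg q)).prov)
  exact hnq.contrapose.mp ((prov_imp_not_not q).mp hq)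

lemma Prov.iff_mp (h : Prov Φ (fIff p q)) (hp : Prov Φ p) : Prov Φ q :=
  h.and_left.mp hp

lemma Prov.iff_mpr (h : Prov Φ (fIff p q)) (hq : Prov Φ q) : Prov Φ p :=
  h.and_right.mp hq

lemma Prov.absurd (hp : Prov Φ p) (hnp : Prov Φ (.neg p)) : Prov Φ fBot :=
  ((Ax.pl2 (.neg p) fBot).prov.mp hnp).mp hp

end Propositional

lemma not_prov_zero_eq_one (hΦ : Consistent Φ) : ¬ Prov Φ (.eq .zero .one) :=
  fun h => hΦ (h.absurd Ax.nondeg.prov)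

/-- `α ≡[Φ] β` is `[α]_Φ = [β]_Φ` in `A_Φ`. -/
abbrev ProvEq (Φ : Set Fml) (α β : Act) : Prop := Prov Φ (.eq α β)

notation:50 α " ≡[" Φ "] " β => ProvEq Φ α β

section Equational

variable {α β γ : Act}

lemma Prov.eq_symm (h : α ≡[Φ] β) : β ≡[Φ] α :=
  (Ax.eqSymm α β).prov.mp h

lemma Prov.eq_trans (h₁ : α ≡[Φ] β) (h₂ : β ≡[Φ] γ) : α ≡[Φ] γ :=
  ((Ax.eqTrans α β γ).prov.mp h₁).mp h₂

instance : @Trans Act Act Act (ProvEq Φ) (ProvEq Φ) (ProvEq Φ) := ⟨Prov.eq_trans⟩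

lemma ARepl.refl (a b x : Act) : ARepl a b x x := by
  induction x with
  | basic n => exact .basic n
  | join x y ihx ihy => exact .join ihx ihy
  | meet x y ihx ihy => exact .meet ihx ihy
  | compl x ihx => exact .compl ihx
  | zero => exact .zero
  | one => exact .one

lemma Prov.subst {p q : Fml} (hp : Prov Φ p) (hr : FRepl α β p q) (hαβ : α ≡[Φ] β) :
    Prov Φ q :=
  ((Ax.subst hr).prov.mp hαβ).mp hp

lemma Prov.meet_congr_left (γ : Act) (h : α ≡[Φ] β) : .meet α γ ≡[Φ] .meet β γ :=
  (Ax.eqRefl _).prov.subst (.eq (.refl α β _) (.meet .repl (.refl α β γ))) h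

lemma Prov.meet_congr_right (γ : Act) (h : α ≡[Φ] β) : .meet γ α ≡[Φ] .meet γ β :=
  (Ax.eqRefl _).prov.subst (.eq (.refl α β _) (.meet (.refl α β γ) .repl)) h

lemma Prov.join_congr_left (γ : Act) (h : α ≡[Φ] β) : .join α γ ≡[Φ] .join β γ :=
  (Ax.eqRefl _).prov.subst (.eq (.refl α β _) (.join .repl (.refl α β γ))) h

lemma Prov.join_congr_right (γ : Act) (h : α ≡[Φ] β) : .join γ α ≡[Φ] .join γ β :=
  (Ax.eqRefl _).prov.subst (.eq (.refl α β _) (.join (.refl α β γ) .repl)) h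

lemma prov_meet_comm (α β : Act) : .meet α β ≡[Φ] .meet β α := (Ax.meetComm α β).prov

lemma prov_eq_join_meet_meet_compl (α γ : Act) :
    α ≡[Φ] .join (.meet α γ) (.meet α (.compl γ)) :=
  calc α ≡[Φ] .meet α .one := (Ax.meetOne α).prov.eq_symm
    _ ≡[Φ] .meet α (.join γ (.compl γ)) := (Ax.joinCompl γ).prov.eq_symm.meet_congr_right α
    _ ≡[Φ] .join (.meet α γ) (.meet α (.compl γ)) := (Ax.meetDistrib α γ (.compl γ)).prov

lemma prov_eq_meet_self (α : Act) : α ≡[Φ] .meet α α :=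
  calc α ≡[Φ] .join (.meet α α) (.meet α (.compl α)) := prov_eq_join_meet_meet_compl α α
    _ ≡[Φ] .join (.meet α α) .zero := (Ax.meetCompl α).prov.join_congr_right _
    _ ≡[Φ] .meet α α := (Ax.joinZero _).prov

lemma prov_meet_zero (α : Act) : .meet α .zero ≡[Φ] .zero :=
  calc .meet α .zero ≡[Φ] .meet α (.meet α (.compl α)) :=
        (Ax.meetCompl α).prov.eq_symm.meet_congr_right α
    _ ≡[Φ] .meet (.meet α α) (.compl α) := (Ax.meetAssoc α α (.compl α)).prov
    _ ≡[Φ] .meet α (.compl α) := (prov_eq_meet_self α).eq_symm.meet_congr_left _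
    _ ≡[Φ] .zero := (Ax.meetCompl α).prov

end Equational

section Deontic

variable {α β γ : Act}

lemma Prov.perm_congr (hα : Prov Φ (.perm α)) (h : α ≡[Φ] β) :
    Prov Φ (.perm β) :=
  hα.subst (.perm .repl) h

lemma Prov.forb_congr (hα : Prov Φ (.forb α)) (h : α ≡[Φ] β) :
    Prov Φ (.forb β) :=
  hα.subst (.forb .repl) h

lemma Prov.perm_meet (h : Prov Φ (.perm α)) (γ : Act) : Prov Φ (.perm (.meet α γ)) :=
  ((Ax.d1 _ _).prov.iff_mp (h.perm_congr (prov_eq_join_meet_meet_compl α γ))).and_left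

lemma Prov.forb_meet (h : Prov Φ (.forb α)) (γ : Act) : Prov Φ (.forb (.meet α γ)) :=
  ((Ax.d2 _ _).prov.iff_mp (h.forb_congr (prov_eq_join_meet_meet_compl α γ))).and_left

lemma prov_perm_of_eq_zero (h : α ≡[Φ] .zero) : Prov Φ (.perm α) :=
  ((Ax.d3 α).prov.iff_mp h).and_left

lemma prov_forb_of_eq_zero (h : α ≡[Φ] .zero) : Prov Φ (.forb α) :=
  ((Ax.d3 α).prov.iff_mp h).and_right

lemma prov_meet_eq_zero_of_perm_of_forb (hα : Prov Φ (.perm α)) (hγ : Prov Φ (.forb γ)) :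
    .meet α γ ≡[Φ] .zero :=
  (Ax.d3 _).prov.iff_mpr
    (prov_and (hα.perm_meet γ) ((hγ.forb_meet α).forb_congr (prov_meet_comm γ α)))

end Deontic

section Ideals

lemma isIdealLT_sInter {S : Set (Set Act)} (h : ∀ I ∈ S, IsIdealLT Φ I) :
    IsIdealLT Φ (⋂₀ S) :=
  ⟨fun α β hαβ hα I hI => (h I hI).1 α β hαβ (hα I hI),
   fun α hα β hβ I hI => (h I hI).2.1 α (hα I hI) β (hβ I hI),
   fun α hα β I hI => (h I hI).2.2 α (hα I hI) β⟩

lemma isIdealLT_genIdealLT (B : Set Act) : IsIdealLT Φ (genIdealLT Φ B) :=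
  isIdealLT_sInter fun _ hI => hI.1

lemma subset_genIdealLT (B : Set Act) : B ⊆ genIdealLT Φ B :=
  fun _ hx _ hI => hI.2 hx

lemma PIdeal_subset {I : Set Act} (hI : IsIdealLT Φ I)
    (h : ∀ α : Act, Prov Φ (.perm α) → α ∈ I) : PIdeal Φ ⊆ I :=
  fun _ hx => hx I ⟨hI, h⟩

lemma FIdeal_subset {I : Set Act} (hI : IsIdealLT Φ I)
    (h : ∀ α : Act, Prov Φ (.forb α) → α ∈ I) : FIdeal Φ ⊆ I :=
  fun _ hx => hx I ⟨hI, h⟩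

lemma zeroClass_subset_PIdeal : zeroClass Φ ⊆ PIdeal Φ :=
  fun _ hα _ hI => hI.2 _ (prov_perm_of_eq_zero hα)

lemma zeroClass_subset_FIdeal : zeroClass Φ ⊆ FIdeal Φ :=
  fun _ hα _ hI => hI.2 _ (prov_forb_of_eq_zero hα)

end Ideals

section Annihilator

/-- The annihilator of `X` in `A_Φ`. -/
def annLT (Φ : Set Fml) (X : Set Act) : Set Act :=
  {β | ∀ γ ∈ X, .meet β γ ≡[Φ] .zero}

variable {X Y : Set Act}

lemma isIdealLT_annLT (X : Set Act) : IsIdealLT Φ (annLT Φ X) := by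
  refine ⟨fun β β' hββ' hβ γ hγ => ?_, fun β₁ hβ₁ β₂ hβ₂ γ hγ => ?_,
    fun β hβ δ γ hγ => ?_⟩
  · exact (hββ'.eq_symm.meet_congr_left γ).eq_trans (hβ γ hγ)
  · have h₁ : .meet γ β₁ ≡[Φ] .zero := (prov_meet_comm γ β₁).eq_trans (hβ₁ γ hγ)
    have h₂ : .meet γ β₂ ≡[Φ] .zero := (prov_meet_comm γ β₂).eq_trans (hβ₂ γ hγ)
    calc .meet (.join β₁ β₂) γ ≡[Φ] .meet γ (.join β₁ β₂) := prov_meet_comm _ _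
      _ ≡[Φ] .join (.meet γ β₁) (.meet γ β₂) := (Ax.meetDistrib γ β₁ β₂).prov
      _ ≡[Φ] .join .zero (.meet γ β₂) := h₁.join_congr_left _
      _ ≡[Φ] .join .zero .zero := h₂.join_congr_right _
      _ ≡[Φ] .zero := (Ax.joinZero .zero).prov
  · calc .meet (.meet β δ) γ
          ≡[Φ] .meet β (.meet δ γ) := (Ax.meetAssoc β δ γ).prov.eq_symm
      _ ≡[Φ] .meet β (.meet γ δ) := (prov_meet_comm δ γ).meet_congr_right β
      _ ≡[Φ] .meet (.meet β γ) δ := (Ax.meetAssoc β γ δ).prov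
      _ ≡[Φ] .meet δ (.meet β γ) := prov_meet_comm _ _
      _ ≡[Φ] .meet δ .zero := (hβ γ hγ).meet_congr_right δ
      _ ≡[Φ] .zero := prov_meet_zero δ

lemma annLT_anti (h : X ⊆ Y) : annLT Φ Y ⊆ annLT Φ X :=
  fun _ hβ γ hγ => hβ γ (h hγ)

lemma subset_annLT_annLT (X : Set Act) : X ⊆ annLT Φ (annLT Φ X) :=
  fun β hβ γ hγ => (prov_meet_comm β γ).eq_trans (hγ β hβ)

lemma annLT_annLT_annLT (X : Set Act) : annLT Φ (annLT Φ (annLT Φ X)) = annLT Φ X :=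
  (annLT_anti (subset_annLT_annLT X)).antisymm (subset_annLT_annLT _)

lemma inter_annLT_subset_zeroClass (X : Set Act) : X ∩ annLT Φ X ⊆ zeroClass Φ :=
  fun β ⟨hβ, hβX⟩ => (prov_eq_meet_self β).eq_trans (hβX β hβ)

/-- If adjoining `β` to `I` keeps it disjoint from the ideal `J`, then `β` annihilates `J`. -/
lemma mem_of_genIdealLT_union_inter_subset {I J : Set Act} {β : Act}
    (hJ : IsIdealLT Φ J) (hJI : annLT Φ J ⊆ I)
    (h : genIdealLT Φ (I ∪ {β}) ∩ J ⊆ zeroClass Φ) : β ∈ I := by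
  refine hJI fun γ hγ => h ⟨?_, ?_⟩
  · exact (isIdealLT_genIdealLT _).2.2 β (subset_genIdealLT _ (.inr rfl)) γ
  · exact hJ.1 _ _ (prov_meet_comm γ β) (hJ.2.2 γ hγ β)

lemma PIdeal_subset_annLT_FIdeal : PIdeal Φ ⊆ annLT Φ (FIdeal Φ) := by
  refine PIdeal_subset (isIdealLT_annLT _) fun α hα γ hγ => ?_
  have hF : FIdeal Φ ⊆ annLT Φ {α} := FIdeal_subset (isIdealLT_annLT _) fun γ hγ α' hα' =>
    hα' ▸ (prov_meet_comm γ α).eq_trans (prov_meet_eq_zero_of_perm_of_forb hα hγ)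
  exact (prov_meet_comm α γ).eq_trans (hF hγ α rfl)

end Annihilator

lemma eConds_annLT_FIdeal (Δ : Set Default) :
    EConds Φ Δ (annLT Φ (FIdeal Φ)) (annLT Φ (annLT Φ (FIdeal Φ))) := by
  refine ⟨isIdealLT_annLT _, isIdealLT_annLT _, PIdeal_subset_annLT_FIdeal,
    subset_annLT_annLT _, fun _ _ _ _ h _ => ?_, fun _ _ _ _ h _ => ?_⟩
  · exact mem_of_genIdealLT_union_inter_subset (isIdealLT_annLT _)
      (annLT_annLT_annLT _).subset h.subset
  · exact mem_of_genIdealLT_union_inter_subset (isIdealLT_annLT _) subset_rfl h.subset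

lemma AlgExt.inter_eq_zeroClass {Δ : Set Default} {P F : Set Act} (h : AlgExt Φ Δ P F) :
    P ∩ F = zeroClass Φ := by
  obtain ⟨⟨-, -, hPIdeal, hFIdeal, -, -⟩, hmin⟩ := h
  obtain ⟨hPQ, hFG⟩ := hmin _ _ (eConds_annLT_FIdeal Δ)
  apply Set.Subset.antisymm
  · exact (Set.inter_subset_inter hPQ hFG).trans (inter_annLT_subset_zeroClass _)
  · exact fun _ hα =>
      ⟨hPIdeal (zeroClass_subset_PIdeal hα), hFIdeal (zeroClass_subset_FIdeal hα)⟩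

end DAL

theorem DAL.algebraic_extension_is_daa_general (Φ : Set DAL.Fml) (hΦ : DAL.Consistent Φ)
    (Δ : Set DAL.Default)
    (P F : Set DAL.Act) (hPF : DAL.AlgExt Φ Δ P F) :
    DAL.IsIdealLT Φ P ∧ DAL.IsIdealLT Φ F ∧
    P ∩ F = DAL.zeroClass Φ ∧
    ¬ DAL.Prov Φ (DAL.Fml.eq DAL.Act.zero DAL.Act.one) :=
  ⟨hPF.1.1, hPF.1.2.1, hPF.inter_eq_zeroClass, DAL.not_prov_zero_eq_one hΦ⟩

/-- Algebraic extensions yield deontic action algebras: if Φ is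
⊢-consistent, Δ is a set of basic deontic defaults, and (P, F) is an algebraic
extension of Φ under Δ, then ⟨A_Φ, P, F⟩ is a deontic action algebra: P and F are
ideals of the nondegenerate Boolean algebra A_Φ and P ∩ F = {[0]_Φ}. -/
theorem DAL.algebraic_extension_is_daa (Φ : Set DAL.Fml) (hΦ : DAL.Consistent Φ)
    (Δ : Set DAL.Default) (hΔ : DAL.BasicDeonticSet Δ)
    (P F : Set DAL.Act) (hPF : DAL.AlgExt Φ Δ P F) :
    DAL.IsIdealLT Φ P ∧ DAL.IsIdealLT Φ F ∧
    P ∩ F = DAL.zeroClass Φ ∧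
    ¬ DAL.Prov Φ (DAL.Fml.eq DAL.Act.zero DAL.Act.one) :=
  DAL.algebraic_extension_is_daa_general Φ hΦ Δ P F hPF
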